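/- arXiv:math/9909149 — 2 statements merged into one kernel-verified Lean document; each statement's English description precedes it below -/
import Mathlib

section
/- Let A be a Banach algebra over ℂ in which every proper closed two-sided ideal equals the intersection of the proper closed prime two-sided ideals containing it. Then for every closed two-sided ideal K of A, the closure of K³ (the linear span of the products k₁k₂k₃ with k₁, k₂, k₃ ∈ K) equals K. -/
set_option linter.unusedSectionVars false

open Filter Topology

section BanachAlgebraPrelude

variable (A : Type*) [NonUnitalNormedRing A] [NormedSpace ℂ A]
  [IsScalarTower ℂ A A] [SMulCommClass ℂ A A] [CompleteSpace A]

/-- `I` is a two-sided ideal of `A` (a `ℂ`-subspace closed under multiplication by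
arbitrary elements of `A` on both sides); not necessarily topologically closed. -/
def IsIdealSet (I : Set A) : Prop :=
  (0 : A) ∈ I ∧ (∀ x ∈ I, ∀ y ∈ I, x + y ∈ I) ∧
    (∀ (c : ℂ), ∀ x ∈ I, c • x ∈ I) ∧
    ∀ x ∈ I, ∀ a : A, a * x ∈ I ∧ x * a ∈ I

/-- `I` is a closed two-sided ideal of `A`. -/
def IsClosedIdeal (I : Set A) : Prop := IsClosed I ∧ IsIdealSet A I

/-- `Id(A)`: the set of closed two-sided ideals of `A` (including `A` itself). -/
abbrev ClosedIdeals := {I : Set A // IsClosedIdeal A I}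

/-- The quotient norm `‖a + I‖ = inf {‖a - m‖ : m ∈ I}`. -/
noncomputable def qnorm (a : A) (I : Set A) : ℝ := Metric.infDist a I

/-- `S_k(A)`: the set of algebra seminorms `ρ` on `A` with `ρ(a) ≤ k‖a‖`,
viewed as a subset of `A → ℝ` (so that it carries the topology of pointwise
convergence). -/
def SK (k : ℕ) : Set (A → ℝ) :=
  {ρ | (∀ a b, ρ (a + b) ≤ ρ a + ρ b) ∧ (∀ (c : ℂ) (a : A), ρ (c • a) = ‖c‖ * ρ a) ∧
    (∀ a b, ρ (a * b) ≤ ρ a * ρ b) ∧ ∀ a, ρ a ≤ k * ‖a‖}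

theorem sk_ker_isClosedIdeal {k : ℕ} {ρ : A → ℝ} (h : ρ ∈ SK A k) :
    IsClosedIdeal A {a | ρ a = 0} := by
  obtain ⟨h1, h2, h3, h4⟩ := h
  have hz : ρ 0 = 0 := by
    have := h2 0 0
    simpa using this
  have hnn : ∀ a, 0 ≤ ρ a := by
    intro a
    have hneg : ρ (-a) = ρ a := by
      have := h2 (-1) a
      simpa using this
    have h' := h1 a (-a)
    rw [show a + -a = (0 : A) by abel, hz, hneg] at h'
    linarith
  have key : ∀ a b : A, ρ a - ρ b ≤ (k : ℝ) * ‖a - b‖ := by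
    intro a b
    have e1 := h1 b (a - b)
    rw [show b + (a - b) = a by abel] at e1
    have e2 := h4 (a - b)
    linarith
  have hlip : LipschitzWith (k : NNReal) ρ := by
    apply LipschitzWith.of_dist_le_mul
    intro a b
    rw [Real.dist_eq, dist_eq_norm, abs_sub_le_iff]
    constructor
    · have := key a b; push_cast; linarith
    · have := key b a; rw [norm_sub_rev] at this; push_cast; linarith
  refine ⟨isClosed_eq hlip.continuous continuous_const, hz, ?_, ?_, ?_⟩
  · intro x hx y hy
    have hx' : ρ x = 0 := hx
    have hy' : ρ y = 0 := hy
    have hle : ρ (x + y) ≤ 0 := by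
      have := h1 x y
      rw [hx', hy'] at this
      linarith
    exact le_antisymm hle (hnn _)
  · intro c x hx
    have hx' : ρ x = 0 := hx
    show ρ (c • x) = 0
    rw [h2 c x, hx', mul_zero]
  · intro x hx a
    have hx' : ρ x = 0 := hx
    constructor
    · have hle : ρ (a * x) ≤ 0 := by
        have := h3 a x
        rw [hx', mul_zero] at this
        linarith
      exact le_antisymm hle (hnn _)
    · have hle : ρ (x * a) ≤ 0 := by
        have := h3 x a
        rw [hx', zero_mul] at this
        linarith
      exact le_antisymm hle (hnn _)

/-- The kernel map `κ_k : S_k(A) → Id(A)`. -/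
noncomputable def kerSK (k : ℕ) (ρ : SK A k) : ClosedIdeals A :=
  ⟨{a | ρ.1 a = 0}, sk_ker_isClosedIdeal A ρ.2⟩

/-- `τ_k`: the quotient topology on `Id(A)` induced by `κ_k`. -/
noncomputable def tauK (k : ℕ) : TopologicalSpace (ClosedIdeals A) :=
  TopologicalSpace.coinduced (kerSK A k) inferInstance

/-- `τ_∞`: the topology on `Id(A)` whose open sets are exactly the sets open in `τ_k`
for every `k`. -/
noncomputable def tauInfty : TopologicalSpace (ClosedIdeals A) := ⨆ k, tauK A k

/-- A character of `A`: a nonzero continuous `ℂ`-algebra homomorphism `A → ℂ`. -/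
def IsCharacter (φ : A → ℂ) : Prop :=
  φ ≠ 0 ∧ Continuous φ ∧ (∀ x y, φ (x + y) = φ x + φ y) ∧
    (∀ (c : ℂ) (x : A), φ (c • x) = c * φ x) ∧ ∀ x y, φ (x * y) = φ x * φ y

/-- The character space of `A`, as a subset of `A → ℂ`; its subspace topology is
the topology of pointwise convergence, i.e. the (relative weak-*) Gelfand topology. -/
abbrev Characters := {φ : A → ℂ // IsCharacter A φ}

/-- The kernel of a character, as a subset of `A`. -/
def charKer (φ : A → ℂ) : Set A := {a | φ a = 0}

theorem charKer_isClosedIdeal {φ : A → ℂ} (h : IsCharacter A φ) :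
    IsClosedIdeal A (charKer A φ) := by
  obtain ⟨-, hc, hadd, hsmul, hmul⟩ := h
  have hz : φ 0 = 0 := by
    have := hsmul 0 0
    simpa using this
  refine ⟨isClosed_eq hc continuous_const, hz, ?_, ?_, ?_⟩
  · intro x hx y hy
    have hx' : φ x = 0 := hx
    have hy' : φ y = 0 := hy
    show φ (x + y) = 0
    rw [hadd, hx', hy', add_zero]
  · intro c x hx
    have hx' : φ x = 0 := hx
    show φ (c • x) = 0
    rw [hsmul, hx', mul_zero]
  · intro x hx a
    have hx' : φ x = 0 := hx
    exact ⟨by show φ (a * x) = 0; rw [hmul, hx', mul_zero],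
      by show φ (x * a) = 0; rw [hmul, hx', zero_mul]⟩

/-- The kernel of a character, as an element of `Id(A)`. -/
noncomputable def charKerIdeal (φ : Characters A) : ClosedIdeals A :=
  ⟨charKer A φ.1, charKer_isClosedIdeal A φ.2⟩

/-- `Prim(A) = {ker φ : φ a character of A}` (also called `M′`),
as a subset of `Id(A)`. -/
def PrimSet : Set (ClosedIdeals A) := Set.range (charKerIdeal A)

/-- The map `φ ↦ ker φ` from the character space onto `Prim(A)`. -/
noncomputable def gelfandMap (φ : Characters A) : PrimSet A :=
  ⟨charKerIdeal A φ, ⟨φ, rfl⟩⟩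

/-- The Gelfand topology on `Prim(A)`, transported from the character space via
`φ ↦ ker φ`. -/
noncomputable def gelfandTop : TopologicalSpace (PrimSet A) :=
  TopologicalSpace.coinduced (gelfandMap A) inferInstance

/-- The lower topology `τ_w` on `Id(A)`, generated by the sets
`{I : I ⊉ J}`; its restriction to any set of (prime) ideals is the
hull-kernel topology. -/
def tauW : TopologicalSpace (ClosedIdeals A) :=
  TopologicalSpace.generateFrom {U | ∃ J : ClosedIdeals A, U = {I | ¬ J.1 ⊆ I.1}}

/-- The restriction of a topology on `Id(A)` to a subset `X ⊆ Id(A)`. -/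
def restrictTop (X : Set (ClosedIdeals A)) (t : TopologicalSpace (ClosedIdeals A)) :
    TopologicalSpace X :=
  TopologicalSpace.induced Subtype.val t

/-- `P` is a proper closed prime two-sided ideal of `A`: for all closed two-sided
ideals `I`, `J`, if `I·J ⊆ P` then `I ⊆ P` or `J ⊆ P`. -/
def IsPrimeIdealSet (P : Set A) : Prop :=
  IsClosedIdeal A P ∧ P ≠ Set.univ ∧
    ∀ I J : ClosedIdeals A, (∀ x ∈ I.1, ∀ y ∈ J.1, x * y ∈ P) → I.1 ⊆ P ∨ J.1 ⊆ P

/-- `Prime(A)`: the set of proper closed prime two-sided ideals of `A`. -/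
def PrimeSet : Set (ClosedIdeals A) := {P | IsPrimeIdealSet A P.1}

/-- A topology `t` on a subset `X ⊆ Id(A)` has the normality property if every
net converging in `t` has the normality property with respect to each of its
limits: whenever `I_α → I (t)` and `a ∉ I`, `liminf_α ‖a + I_α‖ > 0`. -/
def HasNormality (X : Set (ClosedIdeals A)) (t : TopologicalSpace X) : Prop :=
  ∀ (D : Type) [Preorder D], (atTop : Filter D).NeBot →
    ∀ (net : D → X) (I : X),
      Filter.Tendsto net atTop (@nhds _ t I) →
        ∀ a : A, a ∉ I.1.1 →
          0 < Filter.liminf (fun d => qnorm A a (net d).1.1) atTop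

variable {A} in
/-- A closed two-sided ideal, viewed as a `ℂ`-submodule. -/
def idealSubmodule {I : Set A} (h : IsIdealSet A I) : Submodule ℂ A where
  carrier := I
  zero_mem' := h.1
  add_mem' := fun ha hb => h.2.1 _ ha _ hb
  smul_mem' := fun c x hx => h.2.2.1 c x hx

variable {A} in
lemma mapsTo_closure_span (f : A →ₗ[ℂ] A) (hf : Continuous f) {S T : Set A}
    (h : ∀ x ∈ S, f x ∈ Submodule.span ℂ T) :
    Set.MapsTo f (closure ↑(Submodule.span ℂ S)) (closure ↑(Submodule.span ℂ T)) := by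
  have h1 : Submodule.span ℂ S ≤ (Submodule.span ℂ T).comap f :=
    Submodule.span_le.2 h
  have h2 : Set.MapsTo f ↑(Submodule.span ℂ S) ↑(Submodule.span ℂ T) := fun x hx => h1 hx
  exact h2.closure hf

variable {A} in
lemma closure_span_isClosedIdeal {S : Set A}
    (hl : ∀ a : A, ∀ x ∈ S, a * x ∈ Submodule.span ℂ S)
    (hr : ∀ a : A, ∀ x ∈ S, x * a ∈ Submodule.span ℂ S) :
    IsClosedIdeal A (closure ↑(Submodule.span ℂ S)) := by
  refine ⟨isClosed_closure, subset_closure (Submodule.zero_mem _), ?_, ?_, ?_⟩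
  · intro x hx y hy
    exact (Submodule.span ℂ S).topologicalClosure.add_mem hx hy
  · intro c x hx
    exact (Submodule.span ℂ S).topologicalClosure.smul_mem c hx
  · intro x hx a
    constructor
    · exact mapsTo_closure_span (LinearMap.mulLeft ℂ a)
        (continuous_const.mul continuous_id) (hl a) hx
    · exact mapsTo_closure_span (LinearMap.mulRight ℂ a)
        (continuous_id.mul continuous_const) (hr a) hx

/-- From the proof of Proposition 1.14 of the paper: if every proper closed
two-sided ideal of `A` is an intersection of proper closed prime two-sided
ideals, then `(K³)⁻ = K` for every closed two-sided ideal `K` of `A`. -/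
theorem closure_cube_eq
    (hss : ∀ I : ClosedIdeals A, I.1 ≠ Set.univ →
      I.1 = ⋂₀ {P : Set A | IsPrimeIdealSet A P ∧ I.1 ⊆ P})
    (K : ClosedIdeals A) :
    closure ↑(Submodule.span ℂ
        {z : A | ∃ k₁ ∈ K.1, ∃ k₂ ∈ K.1, ∃ k₃ ∈ K.1, z = k₁ * k₂ * k₃}) = K.1 := by

  set S3 := {z : A | ∃ k₁ ∈ K.1, ∃ k₂ ∈ K.1, ∃ k₃ ∈ K.1, z = k₁ * k₂ * k₃} with hS3
  set S2 := {z : A | ∃ k₁ ∈ K.1, ∃ k₂ ∈ K.1, z = k₁ * k₂} with hS2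
  obtain ⟨hKcl, hKid⟩ := K.2
  have hmul := hKid.2.2.2
  -- the closure of span S3 is a closed ideal
  have hL : IsClosedIdeal A (closure ((Submodule.span ℂ S3 : Submodule ℂ A) : Set A)) := by
    apply closure_span_isClosedIdeal
    · rintro a x ⟨k₁, h₁, k₂, h₂, k₃, h₃, rfl⟩
      refine Submodule.subset_span ⟨a * k₁, (hmul k₁ h₁ a).1, k₂, h₂, k₃, h₃, ?_⟩
      simp [mul_assoc]
    · rintro a x ⟨k₁, h₁, k₂, h₂, k₃, h₃, rfl⟩
      refine Submodule.subset_span ⟨k₁, h₁, k₂, h₂, k₃ * a, (hmul k₃ h₃ a).2, ?_⟩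
      simp [mul_assoc]
  have hM : IsClosedIdeal A (closure ↑(Submodule.span ℂ S2)) := by
    apply closure_span_isClosedIdeal
    · rintro a x ⟨k₁, h₁, k₂, h₂, rfl⟩
      exact Submodule.subset_span ⟨a * k₁, (hmul k₁ h₁ a).1, k₂, h₂, (mul_assoc a k₁ k₂).symm⟩
    · rintro a x ⟨k₁, h₁, k₂, h₂, rfl⟩
      exact Submodule.subset_span ⟨k₁, h₁, k₂ * a, (hmul k₂ h₂ a).2, mul_assoc k₁ k₂ a⟩
  -- closure of span S3 ⊆ K
  have hLK : closure ((Submodule.span ℂ S3 : Submodule ℂ A) : Set A) ⊆ K.1 := by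
    have h1 : Submodule.span ℂ S3 ≤ idealSubmodule hKid := by
      apply Submodule.span_le.2
      rintro z ⟨k₁, h₁, k₂, h₂, k₃, h₃, rfl⟩
      exact (hmul k₃ h₃ (k₁ * k₂)).1
    calc closure ((Submodule.span ℂ S3 : Submodule ℂ A) : Set A) ⊆ closure K.1 := closure_mono h1
      _ = K.1 := hKcl.closure_eq
  refine Set.Subset.antisymm hLK ?_
  by_cases hU : closure ((Submodule.span ℂ S3 : Submodule ℂ A) : Set A) = Set.univ
  · rw [hU]; exact Set.subset_univ _
  · have hrep := hss ⟨_, hL⟩ hU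
    intro x hx
    rw [show (⟨_, hL⟩ : ClosedIdeals A).1 = closure ((Submodule.span ℂ S3 : Submodule ℂ A) : Set A) from rfl] at hrep
    rw [hrep]
    rintro P ⟨hP, hLP⟩
    -- every element of K times every element of M lands in closure span S3 ⊆ P
    have hKM : ∀ y ∈ K.1, ∀ m ∈ (⟨_, hM⟩ : ClosedIdeals A).1, y * m ∈ P := by
      intro y hy m hm
      apply hLP
      exact mapsTo_closure_span (LinearMap.mulLeft ℂ y)
        (continuous_const.mul continuous_id)
        (by rintro z ⟨k₁, h₁, k₂, h₂, rfl⟩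
            exact Submodule.subset_span ⟨y, hy, k₁, h₁, k₂, h₂, (mul_assoc y k₁ k₂).symm⟩) hm
    have hKK : ∀ y ∈ K.1, ∀ z ∈ K.1, y * z ∈ P := by
      rcases hP.2.2 K ⟨_, hM⟩ hKM with hKP | hMP
      · intro y hy z hz; exact hKP ((hmul z hz y).1)
      · intro y hy z hz
        exact hMP (subset_closure (Submodule.subset_span ⟨y, hy, z, hz, rfl⟩))
    rcases hP.2.2 K K hKK with hKP | hKP <;> exact hKP hx


end BanachAlgebraPrelude
end

section
/- Let A be a Banach algebra over ℂ in which every proper closed two-sided ideal equals the intersection of the proper closed prime two-sided ideals containing it. Then for every a ∈ A, the closure of the set AaA = {∑_{i=1}^n x_i a y_i : n ∈ ℕ, x_1,…,x_n, y_1,…,y_n ∈ A} equals I_a, the smallest closed two-sided ideal of A containing a. -/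
set_option linter.unusedSectionVars false

open Filter Topology

section BanachAlgebraPrelude

variable (A : Type*) [NonUnitalNormedRing A] [NormedSpace ℂ A]
  [IsScalarTower ℂ A A] [SMulCommClass ℂ A A] [CompleteSpace A]

theorem sum_mem_idealSet {I : Set A} (h : IsIdealSet A I) {n : ℕ} (f : Fin n → A)
    (hf : ∀ i, f i ∈ I) : ∑ i, f i ∈ I := by
  classical
  refine Finset.sum_induction f (· ∈ I) (fun x y hx hy => h.2.1 x hx y hy) h.1 ?_
  exact fun i _ => hf i

theorem isClosedIdeal_closure {I : Set A} (h : IsIdealSet A I) :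
    IsClosedIdeal A (closure I) := by
  obtain ⟨h0, hadd, hsmul, hmul⟩ := h
  refine ⟨isClosed_closure, subset_closure h0, ?_, ?_, ?_⟩
  · intro x hx y hy
    exact map_mem_closure₂ continuous_add hx hy hadd
  · intro c x hx
    exact map_mem_closure (continuous_const_smul c) hx (fun y hy => hsmul c y hy)
  · intro x hx b
    constructor
    · exact map_mem_closure (continuous_mul_left b) hx (fun y hy => (hmul y hy b).1)
    · exact map_mem_closure (f := fun y => y * b) (continuous_mul_right b) hx
        (fun y hy => (hmul y hy b).2)

theorem isClosedIdeal_univ : IsClosedIdeal A Set.univ :=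
  ⟨isClosed_univ, trivial, fun _ _ _ _ => trivial, fun _ _ _ => trivial,
    fun _ _ _ => ⟨trivial, trivial⟩⟩

theorem isClosedIdeal_sInter {F : Set (Set A)} (h : ∀ S ∈ F, IsClosedIdeal A S) :
    IsClosedIdeal A (⋂₀ F) := by
  refine ⟨isClosed_sInter (fun S hS => (h S hS).1), ?_, ?_, ?_, ?_⟩
  · exact fun S hS => (h S hS).2.1
  · intro x hx y hy S hS
    exact (h S hS).2.2.1 x (hx S hS) y (hy S hS)
  · intro c x hx S hS
    exact (h S hS).2.2.2.1 c x (hx S hS)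
  · intro x hx b
    exact ⟨fun S hS => ((h S hS).2.2.2.2 x (hx S hS) b).1,
      fun S hS => ((h S hS).2.2.2.2 x (hx S hS) b).2⟩

theorem isIdealSet_AaA (a : A) :
    IsIdealSet A {z : A | ∃ (n : ℕ) (x y : Fin n → A), z = ∑ i, x i * a * y i} := by
  refine ⟨⟨0, 0, 0, by simp⟩, ?_, ?_, ?_⟩
  · rintro _ ⟨n, x, y, rfl⟩ _ ⟨m, x', y', rfl⟩
    refine ⟨n + m, Fin.append x x', Fin.append y y', ?_⟩
    rw [Fin.sum_univ_add]
    simp [Fin.append_left, Fin.append_right]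
  · rintro c _ ⟨n, x, y, rfl⟩
    refine ⟨n, fun i => c • x i, y, ?_⟩
    rw [Finset.smul_sum]
    simp [smul_mul_assoc]
  · rintro _ ⟨n, x, y, rfl⟩ b
    constructor
    · refine ⟨n, fun i => b * x i, y, ?_⟩
      rw [Finset.mul_sum]
      simp [mul_assoc]
    · refine ⟨n, x, fun i => y i * b, ?_⟩
      rw [Finset.sum_mul]
      simp [mul_assoc]

theorem isIdealSet_sumMulRight {B : Set A} (hB : IsIdealSet A B) :
    IsIdealSet A {z : A | ∃ (n : ℕ) (b v : Fin n → A), (∀ i, b i ∈ B) ∧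
      z = ∑ i, b i * v i} := by
  refine ⟨⟨0, 0, 0, fun i => hB.1, by simp⟩, ?_, ?_, ?_⟩
  · rintro _ ⟨n, b, v, hb, rfl⟩ _ ⟨m, b', v', hb', rfl⟩
    refine ⟨n + m, Fin.append b b', Fin.append v v', ?_, ?_⟩
    · intro i
      refine Fin.addCases (motive := fun i => Fin.append b b' i ∈ B)
        (fun j => ?_) (fun j => ?_) i
      · simp only [Fin.append_left]; exact hb j
      · simp only [Fin.append_right]; exact hb' j
    · rw [Fin.sum_univ_add]
      simp [Fin.append_left, Fin.append_right]
  · rintro c _ ⟨n, b, v, hb, rfl⟩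
    refine ⟨n, fun i => c • b i, v, fun i => hB.2.2.1 c _ (hb i), ?_⟩
    rw [Finset.smul_sum]
    simp [smul_mul_assoc]
  · rintro _ ⟨n, b, v, hb, rfl⟩ w
    constructor
    · refine ⟨n, fun i => w * b i, v, fun i => (hB.2.2.2 _ (hb i) w).1, ?_⟩
      rw [Finset.mul_sum]
      simp [mul_assoc]
    · refine ⟨n, b, fun i => v i * w, hb, ?_⟩
      rw [Finset.sum_mul]
      simp [mul_assoc]

/-- From the proof of Proposition 1.14 of the paper: if every proper closed
two-sided ideal of `A` is an intersection of proper closed prime two-sided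
ideals, then for every `a ∈ A` the closure of `AaA` equals `I_a`, the smallest
closed two-sided ideal of `A` containing `a` (i.e. the intersection of all
closed two-sided ideals containing `a`). -/
theorem closure_AaA_eq_smallest_closed_ideal
    (hss : ∀ I : ClosedIdeals A, I.1 ≠ Set.univ →
      I.1 = ⋂₀ {P : Set A | IsPrimeIdealSet A P ∧ I.1 ⊆ P})
    (a : A) :
    closure {z : A | ∃ (n : ℕ) (x y : Fin n → A), z = ∑ i, x i * a * y i} =
      ⋂₀ {S : Set A | IsClosedIdeal A S ∧ a ∈ S} := by
  set S₀ : Set A := {z : A | ∃ (n : ℕ) (x y : Fin n → A), z = ∑ i, x i * a * y i} with hS₀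
  set M : Set A := closure S₀ with hM
  set B : Set A := ⋂₀ {S : Set A | IsClosedIdeal A S ∧ a ∈ S} with hB
  have hMideal : IsClosedIdeal A M := isClosedIdeal_closure A (isIdealSet_AaA A a)
  have hBideal : IsClosedIdeal A B := isClosedIdeal_sInter A (fun S hS => hS.1)
  -- M ⊆ B
  have hMB : M ⊆ B := by
    refine closure_minimal ?_ hBideal.1
    rintro _ ⟨n, x, y, rfl⟩ S ⟨hSid, haS⟩
    refine sum_mem_idealSet A hSid.2 _ (fun i => ?_)
    exact (hSid.2.2.2.2 _ ((hSid.2.2.2.2 a haS (x i)).1) (y i)).2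
  -- A · B · A ⊆ M
  have hABA : ∀ b ∈ B, ∀ u v : A, u * b * v ∈ M := by
    have hB' : IsClosedIdeal A {b : A | ∀ u v : A, u * b * v ∈ M} ∧
        a ∈ {b : A | ∀ u v : A, u * b * v ∈ M} := by
      constructor
      · constructor
        · have : {b : A | ∀ u v : A, u * b * v ∈ M} =
              ⋂ u : A, ⋂ v : A, (fun b => u * b * v) ⁻¹' M := by
            ext b; simp [Set.mem_iInter]
          rw [this]
          exact isClosed_iInter fun u => isClosed_iInter fun v =>
            IsClosed.preimage (by fun_prop) hMideal.1
        refine ⟨fun u v => by simpa using hMideal.2.1, ?_, ?_, ?_⟩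
        · intro x hx y hy u v
          have : u * (x + y) * v = u * x * v + u * y * v := by
            rw [mul_add, add_mul]
          rw [this]
          exact hMideal.2.2.1 _ (hx u v) _ (hy u v)
        · intro c x hx u v
          have : u * (c • x) * v = c • (u * x * v) := by
            rw [mul_smul_comm, smul_mul_assoc]
          rw [this]
          exact hMideal.2.2.2.1 c _ (hx u v)
        · intro x hx w
          constructor
          · intro u v
            have : u * (w * x) * v = (u * w) * x * v := by rw [mul_assoc u w x]
            rw [this]; exact hx (u * w) v
          · intro u v
            have : u * (x * w) * v = u * x * (w * v) := by
              rw [mul_assoc, mul_assoc, mul_assoc]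
            rw [this]; exact hx u (w * v)
      · intro u v
        exact subset_closure ⟨1, fun _ => u, fun _ => v, by simp⟩
    intro b hb u v
    exact hb _ hB' u v
  -- antisymmetry
  refine le_antisymm hMB ?_
  by_cases hMuniv : M = Set.univ
  · intro x _
    have hx : x ∈ Set.univ := trivial
    rwa [← hMuniv] at hx
  have hMeq := hss ⟨M, hMideal⟩ hMuniv
  simp only at hMeq
  rw [hMeq]
  intro b hb P hP
  obtain ⟨hPprime, hMP⟩ := hP
  obtain ⟨hPideal, hPproper, hPprim⟩ := hPprime
  -- the closed ideal C generated by B·A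
  set C₀ : Set A := {z : A | ∃ (n : ℕ) (bf v : Fin n → A), (∀ i, bf i ∈ B) ∧
    z = ∑ i, bf i * v i} with hC₀
  have hCideal : IsClosedIdeal A (closure C₀) :=
    isClosedIdeal_closure A (isIdealSet_sumMulRight A hBideal.2)
  -- A · C ⊆ P
  have hAC : ∀ x : A, ∀ c ∈ closure C₀, x * c ∈ P := by
    intro x c hc
    rw [← hPideal.1.closure_eq]
    refine map_mem_closure (continuous_mul_left x) hc ?_
    rintro _ ⟨n, bf, v, hbf, rfl⟩
    rw [Finset.mul_sum]
    refine sum_mem_idealSet A hPideal.2 _ (fun i => ?_)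
    have : x * (bf i * v i) = x * bf i * v i := by rw [mul_assoc]
    rw [this]
    exact hMP (hABA _ (hbf i) x (v i))
  -- first application of primeness: C ⊆ P
  have hCP : closure C₀ ⊆ P := by
    rcases hPprim ⟨Set.univ, isClosedIdeal_univ A⟩ ⟨closure C₀, hCideal⟩
      (fun x _ y hy => hAC x y hy) with h | h
    · exact absurd (Set.eq_univ_of_univ_subset h) hPproper
    · exact h
  -- hence B · A ⊆ P
  have hBA : ∀ x ∈ B, ∀ y : A, x * y ∈ P := by
    intro x hx y
    refine hCP (subset_closure ⟨1, fun _ => x, fun _ => y, fun _ => hx, by simp⟩)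
  -- second application of primeness: B ⊆ P
  rcases hPprim ⟨B, hBideal⟩ ⟨Set.univ, isClosedIdeal_univ A⟩
    (fun x hx y _ => hBA x hx y) with h | h
  · exact h hb
  · exact absurd (Set.eq_univ_of_univ_subset h) hPproper

end BanachAlgebraPrelude
end
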